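/- Let X ∈ {0,1}^{n×m} and let k be a positive integer with k < i(X), i.e. X possesses an isolated set of ones S with |S| > k. Then every feasible solution (ξ, π, q) of MLP_exact has strictly positive objective value Σ_{(i,j)∈E} ξ_{ij} + Σ_{(i,j)∉E} π_{ij} > 0. -/
import Mathlib


/-- The index set `E = {(i,j) : x_{ij} = 1}` of positive entries of `X`. -/
def Eset (n m : ℕ) (X : Fin n → Fin m → ℕ) : Finset (Fin n × Fin m) :=
  Finset.univ.filter fun p => X p.1 p.2 = 1

/-- The complement of `E`: indices `(i,j)` with `x_{ij} ≠ 1`. -/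
def Ecomp (n m : ℕ) (X : Fin n → Fin m → ℕ) : Finset (Fin n × Fin m) :=
  Finset.univ.filter fun p => X p.1 p.2 ≠ 1

/-- The set `R = {a bᵀ : a ∈ {0,1}^n \ {0}, b ∈ {0,1}^m \ {0}}` of all nonzero
rank-1 binary `n×m` matrices, as a `Finset` (each pair of nonzero binary vectors is
encoded by a pair of nonzero Boolean vectors). -/
def Rset (n m : ℕ) : Finset (Fin n → Fin m → ℕ) :=
  ((Finset.univ : Finset ((Fin n → Bool) × (Fin m → Bool))).filter
      fun p => p.1 ≠ (fun _ => false) ∧ p.2 ≠ (fun _ => false)).image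
    fun p => fun i j => (if p.1 i then 1 else 0) * (if p.2 j then 1 else 0)
/-- Feasibility for the master LP relaxation `MLP_exact`: variables `ξ_{ij} ≥ 0` for
`(i,j) ∈ E`, `π_{ij} ∈ [0,1]` for `(i,j) ∉ E`, `q_Y ∈ [0,1]` for `Y ∈ R`, subject to
`Σ_Y Y_{ij} q_Y + ξ_{ij} ≥ 1` for `(i,j) ∈ E`, `Σ_Y Y_{ij} q_Y ≤ k π_{ij}` for
`(i,j) ∉ E`, and `Σ_Y q_Y ≤ k`. -/
def MLPexactFeasible (n m k : ℕ) (X : Fin n → Fin m → ℕ)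
    (ξ π : Fin n → Fin m → ℝ) (q : (Fin n → Fin m → ℕ) → ℝ) : Prop :=
  (∀ i j, X i j = 1 → 0 ≤ ξ i j) ∧
  (∀ i j, X i j ≠ 1 → π i j ∈ Set.Icc (0 : ℝ) 1) ∧
  (∀ Y ∈ Rset n m, q Y ∈ Set.Icc (0 : ℝ) 1) ∧
  (∀ i j, X i j = 1 → 1 ≤ (∑ Y ∈ Rset n m, (Y i j : ℝ) * q Y) + ξ i j) ∧
  (∀ i j, X i j ≠ 1 → (∑ Y ∈ Rset n m, (Y i j : ℝ) * q Y) ≤ k * π i j) ∧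
  (∑ Y ∈ Rset n m, q Y) ≤ k

/-- The objective of `MLP_exact`: `Σ_{(i,j)∈E} ξ_{ij} + Σ_{(i,j)∉E} π_{ij}`. -/
def MLPexactObj (n m : ℕ) (X : Fin n → Fin m → ℕ) (ξ π : Fin n → Fin m → ℝ) : ℝ :=
  (∑ p ∈ Eset n m X, ξ p.1 p.2) + ∑ p ∈ Ecomp n m X, π p.1 p.2

/-- `S` is an isolated set of ones of the binary matrix `X`. -/
def IsIsolatedSet (n m : ℕ) (X : Fin n → Fin m → ℕ) (S : Finset (Fin n × Fin m)) : Prop :=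
  (∀ p ∈ S, X p.1 p.2 = 1) ∧
  ∀ p ∈ S, ∀ q ∈ S, p ≠ q →
    p.1 ≠ q.1 ∧ p.2 ≠ q.2 ∧ X p.1 q.2 * X q.1 p.2 = 0

lemma rset_rank1 {n m : ℕ} {Y : Fin n → Fin m → ℕ} (hY : Y ∈ Rset n m)
    {i i' : Fin n} {j j' : Fin m} (h1 : Y i j = 1) (h2 : Y i' j' = 1) : Y i j' = 1 := by
  simp only [Rset, Finset.mem_image, Finset.mem_filter] at hY
  obtain ⟨p, -, rfl⟩ := hY
  by_cases ha : p.1 i <;> by_cases hb : p.2 j' <;> by_cases ha' : p.1 i' <;>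
    by_cases hb' : p.2 j <;> simp_all

lemma rset_01 {n m : ℕ} {Y : Fin n → Fin m → ℕ} (hY : Y ∈ Rset n m)
    (i : Fin n) (j : Fin m) : Y i j = 0 ∨ Y i j = 1 := by
  simp only [Rset, Finset.mem_image, Finset.mem_filter] at hY
  obtain ⟨p, -, rfl⟩ := hY
  by_cases ha : p.1 i <;> by_cases hb : p.2 j <;> simp_all

/-- Let `X ∈ {0,1}^{n×m}` and let `k` be a positive integer with
`k < i(X)`, i.e. `X` possesses an isolated set of ones `S` with `|S| > k`. Then every
feasible solution `(ξ, π, q)` of `MLP_exact` has strictly positive objective value. -/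
theorem stmt_9 (n m k : ℕ) (hk : 0 < k) (X : Fin n → Fin m → ℕ)
    (hX : ∀ i j, X i j = 0 ∨ X i j = 1)
    (S : Finset (Fin n × Fin m)) (hS : IsIsolatedSet n m X S) (hcard : k < S.card)
    (ξ π : Fin n → Fin m → ℝ) (q : (Fin n → Fin m → ℕ) → ℝ)
    (hfeas : MLPexactFeasible n m k X ξ π q) :
    0 < MLPexactObj n m X ξ π := by
  obtain ⟨hξ0, hπ01, hq01, hcons1, hcons2, hsumq⟩ := hfeas
  by_contra hcon
  push_neg at hcon
  have hξnn : ∀ p ∈ Eset n m X, 0 ≤ ξ p.1 p.2 := by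
    intro p hp
    exact hξ0 p.1 p.2 (by simpa [Eset] using hp)
  have hπnn : ∀ p ∈ Ecomp n m X, 0 ≤ π p.1 p.2 := by
    intro p hp
    exact (hπ01 p.1 p.2 (by simpa [Ecomp] using hp)).1
  have hA : 0 ≤ ∑ p ∈ Eset n m X, ξ p.1 p.2 := Finset.sum_nonneg hξnn
  have hB : 0 ≤ ∑ p ∈ Ecomp n m X, π p.1 p.2 := Finset.sum_nonneg hπnn
  unfold MLPexactObj at hcon
  have hA0 : ∑ p ∈ Eset n m X, ξ p.1 p.2 = 0 := by linarith
  have hB0 : ∑ p ∈ Ecomp n m X, π p.1 p.2 = 0 := by linarith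
  have hξz := (Finset.sum_eq_zero_iff_of_nonneg hξnn).mp hA0
  have hπz := (Finset.sum_eq_zero_iff_of_nonneg hπnn).mp hB0
  have hqnn : ∀ Y ∈ Rset n m, 0 ≤ q Y := fun Y hY => (hq01 Y hY).1
  -- Any Y with a one at a zero-entry of X must have q Y = 0
  have hzero : ∀ i j, X i j ≠ 1 → ∀ Y ∈ Rset n m, Y i j = 1 → q Y = 0 := by
    intro i j hij Y hY hY1
    have hπij : π i j = 0 := hπz (i, j) (by simp [Ecomp, hij])
    have h2 := hcons2 i j hij
    rw [hπij, mul_zero] at h2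
    have hterm : ∀ Z ∈ Rset n m, 0 ≤ (Z i j : ℝ) * q Z :=
      fun Z hZ => mul_nonneg (Nat.cast_nonneg _) (hqnn Z hZ)
    have hsum0 : ∑ Z ∈ Rset n m, (Z i j : ℝ) * q Z = 0 :=
      le_antisymm h2 (Finset.sum_nonneg hterm)
    have := (Finset.sum_eq_zero_iff_of_nonneg hterm).mp hsum0 Y hY
    rw [hY1] at this
    simpa using this
  -- each p in S has covering sum ≥ 1
  have hScov : ∀ p ∈ S, (1:ℝ) ≤ ∑ Y ∈ Rset n m, (Y p.1 p.2 : ℝ) * q Y := by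
    intro p hp
    have hx := hS.1 p hp
    have h1 := hcons1 p.1 p.2 hx
    have hz := hξz p (by simp [Eset, hx])
    linarith
  -- per-Y bound: each Y covers at most one element of S (weighted)
  have hper : ∀ Y ∈ Rset n m, ∑ p ∈ S, (Y p.1 p.2 : ℝ) * q Y ≤ q Y := by
    intro Y hY
    rcases eq_or_lt_of_le (hqnn Y hY) with h0 | hpos
    · simp [← h0]
    · have honce : ∀ p ∈ S, ∀ r ∈ S, Y p.1 p.2 = 1 → Y r.1 r.2 = 1 → p = r := by
        intro p hp r hr hYp hYr
        by_contra hne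
        obtain ⟨-, -, hprod⟩ := hS.2 p hp r hr hne
        rcases Nat.mul_eq_zero.mp hprod with h | h
        · have hY1 : Y p.1 r.2 = 1 := rset_rank1 hY hYp hYr
          exact absurd (hzero p.1 r.2 (by omega) Y hY hY1) (ne_of_gt hpos)
        · have hY1 : Y r.1 p.2 = 1 := rset_rank1 hY hYr hYp
          exact absurd (hzero r.1 p.2 (by omega) Y hY hY1) (ne_of_gt hpos)
      set T := S.filter (fun p => Y p.1 p.2 = 1) with hT
      have hsumT : ∑ p ∈ S, (Y p.1 p.2 : ℝ) * q Y = ∑ p ∈ T, q Y := by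
        rw [hT, Finset.sum_filter]
        refine Finset.sum_congr rfl fun p hp => ?_
        rcases rset_01 hY p.1 p.2 with h | h <;> simp [h]
      have hTcard : T.card ≤ 1 := by
        refine Finset.card_le_one.mpr fun a ha b hb => ?_
        rw [hT, Finset.mem_filter] at ha hb
        exact honce a ha.1 b hb.1 ha.2 hb.2
      rw [hsumT, Finset.sum_const, nsmul_eq_mul]
      calc (T.card : ℝ) * q Y ≤ 1 * q Y := by
            apply mul_le_mul_of_nonneg_right _ (le_of_lt hpos)
            exact_mod_cast hTcard
        _ = q Y := one_mul _
  -- combine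
  have hchain : (S.card : ℝ) ≤ (k : ℝ) := by
    calc (S.card : ℝ) = ∑ _p ∈ S, (1:ℝ) := by simp
      _ ≤ ∑ p ∈ S, ∑ Y ∈ Rset n m, (Y p.1 p.2 : ℝ) * q Y := Finset.sum_le_sum hScov
      _ = ∑ Y ∈ Rset n m, ∑ p ∈ S, (Y p.1 p.2 : ℝ) * q Y := Finset.sum_comm
      _ ≤ ∑ Y ∈ Rset n m, q Y := Finset.sum_le_sum hper
      _ ≤ (k : ℝ) := hsumq
  have : S.card ≤ k := by exact_mod_cast hchain
  omega
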